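/- arXiv:1503.00407 — 3 statements merged into one kernel-verified Lean document; each statement's English description precedes it below -/
import Mathlib

section
/- Harmonic oscillator counterexample: the curves q_k(t) = (a_k cos(ωt), b_k sin(ωt)), k = 1..N, with ω² = Σ m_k, Σ m_k a_k = Σ m_k b_k = 0, solve the N-body equations of motion m_k q̈_k = Σ_{i≠k} m_i m_k (q_i − q_k) for the potential α = −2 (U = −(1/2)Σ_{i<j} m_i m_j |q_i − q_j|²); moreover if Σ m_k a_k² = Σ m_k b_k² = c then the moment of inertia I(t) = Σ m_k |q_k(t)|² = c is constant, while the motion is generically not a rigid rotation. -/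
/-!
Each curve is `t ↦ cos (ω t) • a_k + sin (ω t) • (i b_k)`, so `q̈_k = -ω² q_k`. Since the centre of
mass `Σ m_i q_i` vanishes, the force `Σ_{i≠k} m_i m_k (q_i - q_k)` equals `-(Σ m_i) m_k q_k`, which
is `m_k q̈_k` because `ω² = Σ m_i`. The moment of inertia is `(Σ m a²) cos² + (Σ m b²) sin²`,
constant when the two weighted sums agree.
-/

open Finset

section Harmonic

variable {E : Type*} [NormedAddCommGroup E] [NormedSpace ℝ E]

noncomputable def harmonicMotion (c d : E) (ω t : ℝ) : E :=
  Real.cos (ω * t) • c + Real.sin (ω * t) • d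

theorem hasDerivAt_harmonicMotion (c d : E) (ω t : ℝ) :
    HasDerivAt (harmonicMotion c d ω) (harmonicMotion (ω • d) (-(ω • c)) ω t) t := by
  have hωt : HasDerivAt (fun t : ℝ => ω * t) ω t := by
    simpa using (hasDerivAt_id t).const_mul ω
  have hcos := ((Real.hasDerivAt_cos (ω * t)).comp t hωt).smul_const c
  have hsin := ((Real.hasDerivAt_sin (ω * t)).comp t hωt).smul_const d
  refine (hcos.add hsin).congr_deriv ?_
  simp only [harmonicMotion, mul_comm ω]
  module

theorem deriv_harmonicMotion (c d : E) (ω : ℝ) :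
    deriv (harmonicMotion c d ω) = harmonicMotion (ω • d) (-(ω • c)) ω :=
  funext fun t => (hasDerivAt_harmonicMotion c d ω t).deriv

theorem deriv_deriv_harmonicMotion (c d : E) (ω : ℝ) :
    deriv (deriv (harmonicMotion c d ω)) = -(ω ^ 2) • harmonicMotion c d ω := by
  funext t
  simp only [deriv_harmonicMotion, harmonicMotion, Pi.smul_apply]
  module

theorem sum_smul_harmonicMotion {ι : Type*} (s : Finset ι) (m : ι → ℝ) (c d : ι → E) (ω t : ℝ) :
    ∑ i ∈ s, m i • harmonicMotion (c i) (d i) ω t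
      = harmonicMotion (∑ i ∈ s, m i • c i) (∑ i ∈ s, m i • d i) ω t := by
  simp only [harmonicMotion, smul_add, sum_add_distrib, smul_sum, smul_comm (m _)]

end Harmonic

theorem sum_erase_mul_mul_sub {ι R : Type*} [Fintype ι] [DecidableEq ι] [CommRing R]
    (m x : ι → R) (k : ι) :
    ∑ i ∈ univ.erase k, m i * m k * (x i - x k)
      = m k * ∑ i, m i * x i - (∑ i, m i) * m k * x k := by
  rw [sum_erase _ (by simp), mul_sum, sum_mul, sum_mul, ← sum_sub_distrib]
  exact sum_congr rfl fun i _ => by ring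

theorem sum_mul_norm_sq_ellipse {ι : Type*} (s : Finset ι) (m a b : ι → ℝ) (θ : ℝ) :
    ∑ k ∈ s, m k * ‖((a k * Real.cos θ : ℝ) : ℂ) + Complex.I * ((b k * Real.sin θ : ℝ) : ℂ)‖ ^ 2
      = (∑ k ∈ s, m k * a k ^ 2) * Real.cos θ ^ 2 + (∑ k ∈ s, m k * b k ^ 2) * Real.sin θ ^ 2 := by
  rw [sum_mul, sum_mul, ← sum_add_distrib]
  refine sum_congr rfl fun k _ => ?_
  rw [← Complex.normSq_eq_norm_sq, mul_comm Complex.I, Complex.normSq_add_mul_I]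
  ring

theorem harmonic_oscillator_counterexample_general (N : ℕ)
    (m : Fin N → ℝ)
    (a b : Fin N → ℝ) (ω : ℝ) (hω2 : ω ^ 2 = ∑ k, m k)
    (ha : ∑ k, m k * a k = 0) (hb : ∑ k, m k * b k = 0) :
    let q : Fin N → ℝ → ℂ := fun k t =>
      ((a k * Real.cos (ω * t) : ℝ) : ℂ) + Complex.I * ((b k * Real.sin (ω * t) : ℝ) : ℂ)
    (∀ k t, (m k : ℂ) * deriv (deriv (q k)) t
        = ∑ i ∈ Finset.univ.erase k, (m i * m k : ℂ) * (q i t - q k t)) ∧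
    (∀ c : ℝ, (∑ k, m k * a k ^ 2 = c) → (∑ k, m k * b k ^ 2 = c) →
      ∀ t, ∑ k, m k * ‖q k t‖ ^ 2 = c) := by
  intro q
  have hq : ∀ k, q k = harmonicMotion (a k : ℂ) (Complex.I * b k) ω := fun k => by
    funext t
    simp only [q, harmonicMotion, Complex.real_smul]
    push_cast
    ring
  refine ⟨fun k t => ?_, fun c hca hcb t => ?_⟩
  · have hcentre : ∑ i, (m i : ℂ) * q i t = 0 := by
      have hsum_ofReal (x : Fin N → ℝ) : ∑ i, m i • (x i : ℂ) = ((∑ i, m i * x i : ℝ) : ℂ) := by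
        push_cast
        rfl
      have hmb : ∑ i, m i • (Complex.I * b i) = 0 := by
        simp_rw [← mul_smul_comm]
        rw [← mul_sum, hsum_ofReal, hb, Complex.ofReal_zero, mul_zero]
      simp only [← Complex.real_smul, hq]
      rw [sum_smul_harmonicMotion, hsum_ofReal, ha, hmb, harmonicMotion]
      simp
    rw [sum_erase_mul_mul_sub, hcentre, hq k, deriv_deriv_harmonicMotion, ← hq k,
      ← Complex.ofReal_sum, ← hω2, Pi.smul_apply, Complex.real_smul]
    push_cast
    ring
  · rw [sum_mul_norm_sq_ellipse, hca, hcb, ← mul_add, Real.cos_sq_add_sin_sq, mul_one]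

/-- Harmonic oscillator (`α = -2`) counterexample to the generalised Saari
conjecture: elliptic motions with constant moment of inertia. -/
theorem harmonic_oscillator_counterexample (N : ℕ)
    (m : Fin N → ℝ) (hm : ∀ k, 0 < m k)
    (a b : Fin N → ℝ) (ω : ℝ) (hω : 0 < ω) (hω2 : ω ^ 2 = ∑ k, m k)
    (ha : ∑ k, m k * a k = 0) (hb : ∑ k, m k * b k = 0) :
    let q : Fin N → ℝ → ℂ := fun k t =>
      ((a k * Real.cos (ω * t) : ℝ) : ℂ) + Complex.I * ((b k * Real.sin (ω * t) : ℝ) : ℂ)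
    (∀ k t, (m k : ℂ) * deriv (deriv (q k)) t
        = ∑ i ∈ Finset.univ.erase k, (m i * m k : ℂ) * (q i t - q k t)) ∧
    (∀ c : ℝ, (∑ k, m k * a k ^ 2 = c) → (∑ k, m k * b k ^ 2 = c) →
      ∀ t, ∑ k, m k * ‖q k t‖ ^ 2 = c) :=
  harmonic_oscillator_counterexample_general N m a b ω hω2 ha hb
end

section
/- Saari's relation: along any solution of the reduced equations of motion with conserved energy E = ṙ²/2 + (C² + v²)/(2r²) − μ/(α r^α), where v² = r⁴|η̇|²/(1+|η|²)² and r satisfies r̈ = C²/r³ + r|η̇|²/(1+|η|²)² − μ(η)/r^{α+1}, one has dμ/dt = (α r^{α−2}/2) d(v²)/dt. Consequently, μ(η(t)) is constant if and only if v² is constant. -/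
/-!
Differentiate the conserved energy along the motion. The radial equation says exactly that
`r̈ = -∂U/∂r` for the effective potential `U = (C² + v²)/(2r²) - μ/(α r^α)` at frozen `v², μ`,
so every term carrying the factor `ṙ` cancels, leaving `(v²)˙/(2r²) - μ̇/(α r^α) = 0`, which is
Saari's relation. Since its coefficient `α r^{α-2}/2` never vanishes, `μ̇ ≡ 0` iff `(v²)˙ ≡ 0`.
-/

open Real

noncomputable def reducedEnergy (α C r rdot v2 μ : ℝ) : ℝ :=
  rdot ^ 2 / 2 + (C ^ 2 + v2) / (2 * r ^ 2) - μ / (α * r ^ α)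

theorem hasDerivAt_reducedEnergy {α C a w m t : ℝ} {r rdot v2 μ : ℝ → ℝ} (hα : α ≠ 0)
    (hr : 0 < r t) (hr' : HasDerivAt r (rdot t) t) (hrdot : HasDerivAt rdot a t)
    (hv2 : HasDerivAt v2 w t) (hμ : HasDerivAt μ m t) :
    HasDerivAt (fun s => reducedEnergy α C (r s) (rdot s) (v2 s) (μ s))
      (rdot t * (a - (C ^ 2 + v2 t) / r t ^ 3 + μ t / r t ^ (α + 1))
        + w / (2 * r t ^ 2) - m / (α * r t ^ α)) t := by
  have hr0 : r t ≠ 0 := hr.ne'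
  have hrα : r t ^ α ≠ 0 := (rpow_pos_of_pos hr α).ne'
  have hkin := (hrdot.pow 2).div_const 2
  have hcen := ((hasDerivAt_const t (C ^ 2)).add hv2).div ((hr'.pow 2).const_mul 2)
    (mul_ne_zero two_ne_zero (pow_ne_zero 2 hr0))
  have hpot := hμ.div ((hr'.rpow_const (Or.inl hr0)).const_mul α) (mul_ne_zero hα hrα)
  refine ((hkin.add hcen).sub hpot).congr_deriv ?_
  simp only [Pi.pow_apply, Pi.add_apply, rpow_add_one hr0, rpow_sub_one hr0]
  field_simp
  ring

theorem deriv_mu_eq_of_reducedEnergy_eq {α C E a w m t : ℝ} {r rdot v2 μ : ℝ → ℝ}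
    (hα : α ≠ 0) (hr : 0 < r t) (hr' : HasDerivAt r (rdot t) t) (hrdot : HasDerivAt rdot a t)
    (hv2 : HasDerivAt v2 w t) (hμ : HasDerivAt μ m t)
    (henergy : ∀ s, reducedEnergy α C (r s) (rdot s) (v2 s) (μ s) = E)
    (hradial : a = (C ^ 2 + v2 t) / r t ^ 3 - μ t / r t ^ (α + 1)) :
    m = α * r t ^ (α - 2) / 2 * w := by
  have hzero : w / (2 * r t ^ 2) - m / (α * r t ^ α) = 0 := by
    have h := (hasDerivAt_reducedEnergy (C := C) hα hr hr' hrdot hv2 hμ).unique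
      (by simpa only [henergy] using hasDerivAt_const t E)
    rw [hradial] at h
    linear_combination h
  have hr0 : r t ≠ 0 := hr.ne'
  have hrα : r t ^ α ≠ 0 := (rpow_pos_of_pos hr α).ne'
  rw [show r t ^ (α - 2) = r t ^ α / r t ^ 2 by simpa using rpow_sub_natCast hr0 α 2]
  field_simp at hzero ⊢
  linarith

theorem forall_eq_iff_forall_eq_of_deriv_eq_mul {f g c : ℝ → ℝ} (hf : Differentiable ℝ f)
    (hg : Differentiable ℝ g) (hc : ∀ t, c t ≠ 0) (hfg : ∀ t, deriv f t = c t * deriv g t) :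
    (∀ s t, f s = f t) ↔ ∀ s t, g s = g t := by
  have deriv_zero_of_const {h : ℝ → ℝ} (hh : ∀ s t, h s = h t) (t : ℝ) : deriv h t = 0 := by
    rw [show h = fun _ => h 0 from funext fun s => hh s 0, deriv_const]
  constructor
  · intro hfc
    refine is_const_of_deriv_eq_zero hg fun t => ?_
    simpa [hc t, deriv_zero_of_const hfc t] using (hfg t).symm
  · intro hgc
    exact is_const_of_deriv_eq_zero hf fun t => by rw [hfg, deriv_zero_of_const hgc, mul_zero]

theorem saari_relation_general (α : ℝ) (hα : α ≠ 0) (C E : ℝ)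
    (r x y μ : ℝ → ℝ)
    (hr : ∀ t, 0 < r t)
    (hrsm : ContDiff ℝ 2 r)
    (hμsm : Differentiable ℝ μ)
    (v2 : ℝ → ℝ)
    (hv2 : v2 = fun t => r t ^ 4 * ((deriv x t) ^ 2 + (deriv y t) ^ 2)
        / (1 + x t ^ 2 + y t ^ 2) ^ 2)
    (hv2sm : Differentiable ℝ v2)
    (henergy : ∀ t, E = (deriv r t) ^ 2 / 2 + (C ^ 2 + v2 t) / (2 * r t ^ 2)
        - μ t / (α * r t ^ α))
    (hradial : ∀ t, deriv (deriv r) t = C ^ 2 / r t ^ 3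
        + r t * ((deriv x t) ^ 2 + (deriv y t) ^ 2) / (1 + x t ^ 2 + y t ^ 2) ^ 2
        - μ t / r t ^ (α + 1)) :
    (∀ t, deriv μ t = (α * r t ^ (α - 2) / 2) * deriv v2 t) ∧
    ((∀ s t, μ s = μ t) ↔ (∀ s t, v2 s = v2 t)) := by
  have hrd : Differentiable ℝ r := hrsm.differentiable (by norm_num)
  have hrdotd : Differentiable ℝ (deriv r) := hrsm.differentiable_deriv_two
  have hradial_v2 (t : ℝ) : deriv (deriv r) t
      = (C ^ 2 + v2 t) / r t ^ 3 - μ t / r t ^ (α + 1) := by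
    have : (1 + x t ^ 2 + y t ^ 2) ^ 2 ≠ 0 := by positivity
    rw [hradial t, hv2]
    field_simp [(hr t).ne']
  have saari (t : ℝ) : deriv μ t = (α * r t ^ (α - 2) / 2) * deriv v2 t :=
    deriv_mu_eq_of_reducedEnergy_eq hα (hr t) (hrd t).hasDerivAt (hrdotd t).hasDerivAt
      (hv2sm t).hasDerivAt (hμsm t).hasDerivAt (fun s => (henergy s).symm) (hradial_v2 t)
  refine ⟨saari, forall_eq_iff_forall_eq_of_deriv_eq_mul hμsm hv2sm (fun t => ?_) saari⟩
  have := rpow_pos_of_pos (hr t) (α - 2)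
  positivity

/-- Saari's relation `dμ/dt = (α r^{α-2}/2) d(v²)/dt` along solutions of the
reduced equations of motion, and the consequence that `μ` is constant iff `v²`
is constant. -/
theorem saari_relation (α : ℝ) (hα : α ≠ 0) (C E : ℝ)
    (r x y μ : ℝ → ℝ)
    (hr : ∀ t, 0 < r t)
    (hrsm : ContDiff ℝ 2 r) (hxsm : Differentiable ℝ x) (hysm : Differentiable ℝ y)
    (hμsm : Differentiable ℝ μ)
    (v2 : ℝ → ℝ)
    (hv2 : v2 = fun t => r t ^ 4 * ((deriv x t) ^ 2 + (deriv y t) ^ 2)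
        / (1 + x t ^ 2 + y t ^ 2) ^ 2)
    (hv2sm : Differentiable ℝ v2)
    (henergy : ∀ t, E = (deriv r t) ^ 2 / 2 + (C ^ 2 + v2 t) / (2 * r t ^ 2)
        - μ t / (α * r t ^ α))
    (hradial : ∀ t, deriv (deriv r) t = C ^ 2 / r t ^ 3
        + r t * ((deriv x t) ^ 2 + (deriv y t) ^ 2) / (1 + x t ^ 2 + y t ^ 2) ^ 2
        - μ t / r t ^ (α + 1)) :
    (∀ t, deriv μ t = (α * r t ^ (α - 2) / 2) * deriv v2 t) ∧
    ((∀ s t, μ s = μ t) ↔ (∀ s t, v2 s = v2 t)) :=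
  saari_relation_general α hα C E r x y μ hr hrsm hμsm v2 hv2 hv2sm henergy hradial
end

section
/- Shape sphere metric in bipolar coordinates: under the change of variables x = (m1−m2)√n/(2(m1+m2)) + (√n/2)(r2² − r1²), y = (√n/2)·sqrt((1−(r1−r2)²)((r1+r2)²−1)), with n = (m1+m2)² m3/((m1+m2+m3) m1 m2), the metric ds² = (dx² + dy²)/(1+x²+y²)² equals ds² = 4 m1 m2 m3 (m1+m2+m3) r1 r2 (r1 r2 (dr1² + dr2²) − (r1² + r2² − 1) dr1 dr2) / ((1−(r1−r2)²)((r1+r2)²−1)(m1 m2 + m2 m3 r1² + m3 m1 r2²)²). -/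
/-!
Write `D(s, t) = (1 - (s - t)²)((s + t)² - 1)`, so that `x = √n ((m1 - m2)/(2(m1 + m2)) + (t² - s²)/2)`
and `y = (√n / 2) √D`. Since `D = 2(s² + t²) - 1 - (s² - t²)²` is symmetric with
`∂D/∂s = 4s(1 - s² + t²)`, the differentials `dx, dy` are explicit, and `dx² + dy²` is `n / D` times a
polynomial quadratic form in `(ds, dt)`. Expanding the square in `x` cancels the `(s² - t²)²` term of `D`,
which leaves the moment-of-inertia identity
`1 + x² + y² = (m1 + m2)(m1 m2 + m2 m3 s² + m3 m1 t²) / ((m1 + m2 + m3) m1 m2)`.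
-/

open Real

def bipolarDisc (s t : ℝ) : ℝ := (1 - (s - t) ^ 2) * ((s + t) ^ 2 - 1)

theorem bipolarDisc_comm (s t : ℝ) : bipolarDisc s t = bipolarDisc t s := by
  unfold bipolarDisc; ring

theorem bipolarDisc_pos {s t : ℝ} (h₁ : |s - t| < 1) (h₂ : 1 < s + t) : 0 < bipolarDisc s t := by
  have h₁' : (s - t) ^ 2 < 1 := by simpa using sq_lt_one_iff_abs_lt_one (s - t) |>.mpr h₁
  have h₂' : 1 < (s + t) ^ 2 := by nlinarith
  exact mul_pos (by linarith) (by linarith)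

theorem hasDerivAt_bipolarDisc_left (s t : ℝ) :
    HasDerivAt (fun s => bipolarDisc s t) (4 * s * (1 - s ^ 2 + t ^ 2)) s := by
  have h := ((((hasDerivAt_id' s).sub_const t).fun_pow 2).const_sub 1).mul
    ((((hasDerivAt_id' s).add_const t).fun_pow 2).sub_const 1)
  refine h.congr_deriv ?_
  ring

theorem hasDerivAt_sqrt_bipolarDisc_left {s t : ℝ} (h : 0 < bipolarDisc s t) :
    HasDerivAt (fun s => √(bipolarDisc s t))
      (2 * s * (1 - s ^ 2 + t ^ 2) / √(bipolarDisc s t)) s := by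
  convert (hasDerivAt_bipolarDisc_left s t).sqrt h.ne' using 1
  ring

theorem hasDerivAt_sqrt_bipolarDisc_right {s t : ℝ} (h : 0 < bipolarDisc s t) :
    HasDerivAt (fun t => √(bipolarDisc s t))
      (2 * t * (1 - t ^ 2 + s ^ 2) / √(bipolarDisc s t)) t := by
  simp only [bipolarDisc_comm s] at h ⊢
  exact hasDerivAt_sqrt_bipolarDisc_left h

theorem sq_mul_bipolarDisc_add_sq (s t a b : ℝ) :
    (t * b - s * a) ^ 2 * bipolarDisc s t
        + (s * (1 - s ^ 2 + t ^ 2) * a + t * (1 - t ^ 2 + s ^ 2) * b) ^ 2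
      = 4 * s * t * (s * t * (a ^ 2 + b ^ 2) - (s ^ 2 + t ^ 2 - 1) * a * b) := by
  unfold bipolarDisc; ring

theorem bipolar_differentials_sq_add_sq (c : ℝ) {s t : ℝ} (hD : 0 < bipolarDisc s t) (a b : ℝ) :
    (c * (t * b - s * a)) ^ 2
        + (c * (s * (1 - s ^ 2 + t ^ 2) * a + t * (1 - t ^ 2 + s ^ 2) * b) / √(bipolarDisc s t)) ^ 2
      = c ^ 2 * (4 * s * t * (s * t * (a ^ 2 + b ^ 2) - (s ^ 2 + t ^ 2 - 1) * a * b))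
        / bipolarDisc s t := by
  rw [div_pow, mul_pow, mul_pow, sq_sqrt hD.le, ← sq_mul_bipolarDisc_add_sq]
  field_simp

theorem sq_add_bipolarDisc_div_four {m1 m2 : ℝ} (hm : m1 + m2 ≠ 0) (s t : ℝ) :
    ((m1 - m2) / (2 * (m1 + m2)) + (t ^ 2 - s ^ 2) / 2) ^ 2 + bipolarDisc s t / 4
      = (m1 * t ^ 2 + m2 * s ^ 2) / (m1 + m2) - m1 * m2 / (m1 + m2) ^ 2 := by
  unfold bipolarDisc
  field_simp
  ring

theorem one_add_mul_sq_add_bipolarDisc_div_four {m1 m2 m3 : ℝ} (hm1 : m1 ≠ 0) (hm2 : m2 ≠ 0)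
    (hm12 : m1 + m2 ≠ 0) (hm123 : m1 + m2 + m3 ≠ 0) (s t : ℝ) :
    1 + (m1 + m2) ^ 2 * m3 / ((m1 + m2 + m3) * m1 * m2)
        * (((m1 - m2) / (2 * (m1 + m2)) + (t ^ 2 - s ^ 2) / 2) ^ 2 + bipolarDisc s t / 4)
      = (m1 + m2) * (m1 * m2 + m2 * m3 * s ^ 2 + m3 * m1 * t ^ 2) / ((m1 + m2 + m3) * m1 * m2) := by
  rw [sq_add_bipolarDisc_div_four hm12]
  field_simp
  ring

theorem shape_sphere_metric_bipolar_general (m1 m2 m3 : ℝ)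
    (hm1 : 0 < m1) (hm2 : 0 < m2) (hm3 : 0 < m3)
    (r1 r2 : ℝ)
    (htri1 : |r1 - r2| < 1) (htri2 : 1 < r1 + r2) :
    let n : ℝ := (m1 + m2) ^ 2 * m3 / ((m1 + m2 + m3) * m1 * m2)
    let X : ℝ → ℝ → ℝ := fun s t =>
      (m1 - m2) * Real.sqrt n / (2 * (m1 + m2)) + (Real.sqrt n / 2) * (t ^ 2 - s ^ 2)
    let Y : ℝ → ℝ → ℝ := fun s t =>
      (Real.sqrt n / 2) * Real.sqrt ((1 - (s - t) ^ 2) * ((s + t) ^ 2 - 1))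
    ∀ a b : ℝ,
      let dx : ℝ := deriv (fun s => X s r2) r1 * a + deriv (fun t => X r1 t) r2 * b
      let dy : ℝ := deriv (fun s => Y s r2) r1 * a + deriv (fun t => Y r1 t) r2 * b
      (dx ^ 2 + dy ^ 2) / (1 + X r1 r2 ^ 2 + Y r1 r2 ^ 2) ^ 2
        = 4 * m1 * m2 * m3 * (m1 + m2 + m3) * r1 * r2
            * (r1 * r2 * (a ^ 2 + b ^ 2) - (r1 ^ 2 + r2 ^ 2 - 1) * a * b)
          / ((1 - (r1 - r2) ^ 2) * ((r1 + r2) ^ 2 - 1)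
            * (m1 * m2 + m2 * m3 * r1 ^ 2 + m3 * m1 * r2 ^ 2) ^ 2) := by
  intro n X Y a b dx dy
  have hD := bipolarDisc_pos htri1 htri2
  have hn : 0 ≤ n := by positivity
  have hdx : dx = √n * (r2 * b - r1 * a) := by
    have h₁ : HasDerivAt (fun s => X s r2) (-(√n * r1)) r1 :=
      (((hasDerivAt_pow 2 r1).const_sub _).const_mul _).const_add _ |>.congr_deriv (by ring)
    have h₂ : HasDerivAt (fun t => X r1 t) (√n * r2) r2 :=
      (((hasDerivAt_pow 2 r2).sub_const _).const_mul _).const_add _ |>.congr_deriv (by ring)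
    simp only [dx, h₁.deriv, h₂.deriv]
    ring
  have hdy : dy = √n * (r1 * (1 - r1 ^ 2 + r2 ^ 2) * a + r2 * (1 - r2 ^ 2 + r1 ^ 2) * b)
      / √(bipolarDisc r1 r2) := by
    have h₁ : HasDerivAt (fun s => Y s r2) _ r1 :=
      (hasDerivAt_sqrt_bipolarDisc_left hD).const_mul (√n / 2)
    have h₂ : HasDerivAt (fun t => Y r1 t) _ r2 :=
      (hasDerivAt_sqrt_bipolarDisc_right hD).const_mul (√n / 2)
    simp only [dy, h₁.deriv, h₂.deriv]
    ring
  have hden : 1 + X r1 r2 ^ 2 + Y r1 r2 ^ 2 = 1 + n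
      * (((m1 - m2) / (2 * (m1 + m2)) + (r2 ^ 2 - r1 ^ 2) / 2) ^ 2 + bipolarDisc r1 r2 / 4) := by
    have hX : X r1 r2 = √n * ((m1 - m2) / (2 * (m1 + m2)) + (r2 ^ 2 - r1 ^ 2) / 2) := by
      simp only [X]
      ring
    have hY : Y r1 r2 = √n / 2 * √(bipolarDisc r1 r2) := rfl
    rw [hX, hY, mul_pow, mul_pow, div_pow, sq_sqrt hn, sq_sqrt hD.le]
    ring
  rw [hdx, hdy, bipolar_differentials_sq_add_sq _ hD, sq_sqrt hn, hden,
    one_add_mul_sq_add_bipolarDisc_div_four hm1.ne' hm2.ne' (by positivity) (by positivity)]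
  simp only [n]
  unfold bipolarDisc
  field_simp

/-- The shape-sphere metric `ds² = (dx²+dy²)/(1+x²+y²)²` in two-center bipolar
coordinates `(r1, r2)`. -/
theorem shape_sphere_metric_bipolar (m1 m2 m3 : ℝ)
    (hm1 : 0 < m1) (hm2 : 0 < m2) (hm3 : 0 < m3)
    (r1 r2 : ℝ) (hr1 : 0 < r1) (hr2 : 0 < r2)
    (htri1 : |r1 - r2| < 1) (htri2 : 1 < r1 + r2) :
    let n : ℝ := (m1 + m2) ^ 2 * m3 / ((m1 + m2 + m3) * m1 * m2)
    let X : ℝ → ℝ → ℝ := fun s t =>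
      (m1 - m2) * Real.sqrt n / (2 * (m1 + m2)) + (Real.sqrt n / 2) * (t ^ 2 - s ^ 2)
    let Y : ℝ → ℝ → ℝ := fun s t =>
      (Real.sqrt n / 2) * Real.sqrt ((1 - (s - t) ^ 2) * ((s + t) ^ 2 - 1))
    ∀ a b : ℝ,
      let dx : ℝ := deriv (fun s => X s r2) r1 * a + deriv (fun t => X r1 t) r2 * b
      let dy : ℝ := deriv (fun s => Y s r2) r1 * a + deriv (fun t => Y r1 t) r2 * b
      (dx ^ 2 + dy ^ 2) / (1 + X r1 r2 ^ 2 + Y r1 r2 ^ 2) ^ 2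
        = 4 * m1 * m2 * m3 * (m1 + m2 + m3) * r1 * r2
            * (r1 * r2 * (a ^ 2 + b ^ 2) - (r1 ^ 2 + r2 ^ 2 - 1) * a * b)
          / ((1 - (r1 - r2) ^ 2) * ((r1 + r2) ^ 2 - 1)
            * (m1 * m2 + m2 * m3 * r1 ^ 2 + m3 * m1 * r2 ^ 2) ^ 2) :=
  shape_sphere_metric_bipolar_general m1 m2 m3 hm1 hm2 hm3 r1 r2 htri1 htri2
end
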